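/- Lower bound for the cyclic contiguous hitting number: if H ⊆ Z_N intersects every set that is the union of two disjoint cyclic intervals of length T (N ≥ 2T), then |H| ≥ ⌈N/T⌉ - 1. -/

import Mathlib

/-!
Let `k = ⌈N/T⌉ - 1`, so that `k * T < N`. If every cyclic interval of length `T` meets `H`,
then the `k` disjoint intervals starting at `0, T, …, (k-1)T` give `k` distinct points of `H`.
Otherwise some interval misses `H`. Sliding it forward by one keeps it disjoint from `H` as
long as the point entering it is not in `H`, and `H ≠ ∅`, so we find an interval `[j, j+T)`
missing `H` with `j + T ∈ H`. Every interval inside `[j+T, j+N)` is disjoint from `[j, j+T)`,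
so by hypothesis it meets `H`. The `k` disjoint intervals starting
at `j+1, j+1+T, …, j+1+(k-1)T` all lie in `[j+1, j+N)`: the first contains `j + T`, and
each of the others meets `H` by the hypothesis.
-/

/-- The cyclic interval `{j, j+1, ..., j+T-1}` (mod `N`). -/
def cycInt (N T : ℕ) (j : ZMod N) : Finset (ZMod N) :=
  (Finset.range T).image (fun t : ℕ => j + (t : ZMod N))

theorem mem_cycInt {N T : ℕ} {j x : ZMod N} :
    x ∈ cycInt N T j ↔ ∃ t < T, j + (t : ZMod N) = x := by
  simp [cycInt]

theorem self_mem_cycInt {N T : ℕ} (hT : 0 < T) (j : ZMod N) : j ∈ cycInt N T j :=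
  mem_cycInt.2 ⟨0, hT, by simp⟩

theorem cycInt_add_one_subset (N T : ℕ) (j : ZMod N) :
    cycInt N T (j + 1) ⊆ insert (j + T) (cycInt N T j) := by
  intro x hx
  obtain ⟨t, ht, rfl⟩ := mem_cycInt.1 hx
  rcases Nat.lt_or_ge (t + 1) T with hlt | hge
  · exact Finset.mem_insert_of_mem (mem_cycInt.2 ⟨t + 1, hlt, by push_cast; ring⟩)
  · obtain rfl : T = t + 1 := by omega
    exact Finset.mem_insert.2 (Or.inl (by push_cast; ring))

theorem disjoint_cycInt_add_natCast {N T a b : ℕ} (j : ZMod N) (hab : a + T ≤ b)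
    (hb : b + T ≤ N) : Disjoint (cycInt N T (j + a)) (cycInt N T (j + b)) := by
  refine Finset.disjoint_left.2 fun x hxa hxb => ?_
  obtain ⟨t, ht, rfl⟩ := mem_cycInt.1 hxa
  obtain ⟨s, hs, hst⟩ := mem_cycInt.1 hxb
  have hcast : ((b + s : ℕ) : ZMod N) = ((a + t : ℕ) : ZMod N) := by
    push_cast
    simpa [add_assoc] using hst
  have := congrArg ZMod.val hcast
  rw [ZMod.val_natCast_of_lt (by omega), ZMod.val_natCast_of_lt (by omega)] at this
  omega

theorem le_card_of_cycInt_progression_inter_nonempty {N T c k : ℕ} {H : Finset (ZMod N)}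
    (j : ZMod N) (hk : c + k * T ≤ N)
    (hmeet : ∀ i < k, (cycInt N T (j + ((c + i * T : ℕ) : ZMod N)) ∩ H).Nonempty) :
    k ≤ H.card := by
  set A : ℕ → Finset (ZMod N) := fun i => cycInt N T (j + ((c + i * T : ℕ) : ZMod N)) ∩ H
  have hdisj : ∀ i l, i < l → l < k → Disjoint (A i) (A l) := by
    intro i l hil hlk
    have hstep : (i + 1) * T ≤ l * T := Nat.mul_le_mul_right T hil
    have hend : (l + 1) * T ≤ k * T := Nat.mul_le_mul_right T hlk
    rw [add_one_mul] at hstep hend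
    exact (disjoint_cycInt_add_natCast j (by omega) (by omega)).mono
      Finset.inter_subset_left Finset.inter_subset_left
  have hpair : ((Finset.range k : Finset ℕ) : Set ℕ).PairwiseDisjoint A := by
    intro i hi l hl hne
    simp only [Finset.coe_range, Set.mem_Iio] at hi hl
    rcases hne.lt_or_gt with h | h
    · exact hdisj i l h hl
    · exact (hdisj l i h hi).symm
  calc k = (Finset.range k).card := (Finset.card_range k).symm
    _ ≤ ((Finset.range k).biUnion A).card :=
      Finset.card_le_card_biUnion hpair fun i hi => hmeet i (Finset.mem_range.1 hi)
    _ ≤ H.card :=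
      Finset.card_le_card (Finset.biUnion_subset.2 fun _ _ => Finset.inter_subset_right)

theorem exists_cycInt_inter_eq_empty_and_add_mem {N T : ℕ} [NeZero N] (hT : 0 < T)
    {H : Finset (ZMod N)} (hH : H.Nonempty) {j : ZMod N} (hj : cycInt N T j ∩ H = ∅) :
    ∃ j', cycInt N T j' ∩ H = ∅ ∧ j' + T ∈ H := by
  by_contra! hstuck
  have hempty : ∀ n : ℕ, cycInt N T (j + n) ∩ H = ∅ := by
    intro n
    induction n with
    | zero => simpa using hj
    | succ n ih =>
      refine Finset.subset_empty.1 ?_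
      calc cycInt N T (j + (n + 1 : ℕ)) ∩ H
          ⊆ insert (j + n + T) (cycInt N T (j + n)) ∩ H := by
            push_cast
            rw [← add_assoc]
            exact Finset.inter_subset_inter_right (cycInt_add_one_subset N T _)
        _ = ∅ := by rw [Finset.insert_inter_of_notMem (hstuck _ ih), ih]
  obtain ⟨x, hx⟩ := hH
  have := hempty (x - j).val
  rw [ZMod.natCast_zmod_val, add_sub_cancel] at this
  exact Finset.notMem_empty x (this ▸ Finset.mem_inter.2 ⟨self_mem_cycInt hT x, hx⟩)

theorem cycInt_add_natCast_inter_nonempty {N T b : ℕ} {H : Finset (ZMod N)}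
    (hhit : ∀ j k : ZMod N, Disjoint (cycInt N T j) (cycInt N T k) →
      ((cycInt N T j ∪ cycInt N T k) ∩ H).Nonempty)
    {j : ZMod N} (hj : cycInt N T j ∩ H = ∅) (hTb : T ≤ b) (hb : b + T ≤ N) :
    (cycInt N T (j + b) ∩ H).Nonempty := by
  have hdisj := disjoint_cycInt_add_natCast j (a := 0) (by omega) hb
  rw [Nat.cast_zero, add_zero] at hdisj
  simpa [Finset.union_inter_distrib_right, hj] using hhit _ _ hdisj

theorem ceil_div_sub_one_mul_lt {N T : ℕ} (hN : 0 < N) (hT : 0 < T) :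
    (⌈(N : ℚ) / T⌉₊ - 1) * T < N := by
  have hceil : (⌈(N : ℚ) / T⌉₊ : ℚ) * T < N + T := by
    calc (⌈(N : ℚ) / T⌉₊ : ℚ) * T < ((N : ℚ) / T + 1) * T := by
          gcongr
          exact Nat.ceil_lt_add_one (by positivity)
      _ = N + T := by field_simp
  have : ⌈(N : ℚ) / T⌉₊ * T < N + T := by exact_mod_cast hceil
  rw [Nat.sub_one_mul]
  omega

/-- Lower bound for the cyclic contiguous hitting number: if `H ⊆ Z_N` intersects every
set that is the union of two disjoint cyclic intervals of length `T` (with `N ≥ 2T`),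
then `|H| ≥ ⌈N/T⌉ - 1`. -/
theorem cyclic_contiguous_hitting_lower_bound (N T : ℕ) (hT : 1 ≤ T) (hN : 2 * T ≤ N)
    (H : Finset (ZMod N))
    (hhit : ∀ j k : ZMod N, Disjoint (cycInt N T j) (cycInt N T k) →
      ((cycInt N T j ∪ cycInt N T k) ∩ H).Nonempty) :
    ⌈(N : ℚ) / (T : ℚ)⌉₊ - 1 ≤ H.card := by
  have : NeZero N := ⟨by omega⟩
  set k := ⌈(N : ℚ) / (T : ℚ)⌉₊ - 1
  have hk : k * T < N := ceil_div_sub_one_mul_lt (by omega) hT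
  by_cases hall : ∀ j : ZMod N, (cycInt N T j ∩ H).Nonempty
  · exact le_card_of_cycInt_progression_inter_nonempty (T := T) (c := 0) (k := k) 0 (by omega)
      fun i _ => hall _
  obtain ⟨j₀, hj₀⟩ : ∃ j, cycInt N T j ∩ H = ∅ := by
    simpa only [not_forall, Finset.not_nonempty_iff_eq_empty] using hall
  have hH : H.Nonempty :=
    (cycInt_add_natCast_inter_nonempty hhit hj₀ le_rfl (by omega)).mono Finset.inter_subset_right
  obtain ⟨j, hj, hjT⟩ := exists_cycInt_inter_eq_empty_and_add_mem hT hH hj₀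
  refine le_card_of_cycInt_progression_inter_nonempty (T := T) (c := 1) (k := k) j (by omega)
    fun i hi => ?_
  rcases Nat.eq_zero_or_pos i with rfl | hi0
  · refine ⟨j + T, Finset.mem_inter.2 ⟨mem_cycInt.2 ⟨T - 1, by omega, ?_⟩, hjT⟩⟩
    push_cast [Nat.cast_sub hT]
    ring
  · have hiT : T ≤ i * T := Nat.le_mul_of_pos_left T hi0
    have hend : (i + 1) * T ≤ k * T := Nat.mul_le_mul_right T hi
    rw [add_one_mul] at hend
    exact cycInt_add_natCast_inter_nonempty hhit hj (by omega) (by omega)
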